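/- arXiv:1708.04869 — 5 statements merged into one kernel-verified Lean document; each statement's English description precedes it below -/
import Mathlib

section
/- For probability measures μ, ν on ℝ, μ ⪯_c ν (convex order) holds if and only if u_μ(x) ≤ u_ν(x) for all x ∈ ℝ and μ, ν have the same mean, where u_α(x) := ∫|x−y| dα(y). -/
/-!
For the forward direction, test convex order on the convex functions `|x - ·|` and `±id`.

Conversely, the right derivative of a convex `φ` is monotone, so its right-continuous version `γ`
is a Stieltjes function whose measure `dγ` plays the role of `φ''`. Taylor's formula with
integral remainder then reads `φ y = φ 0 + γ 0 * y + ∫ k(y, s) dγ(s)`, where `k(y, s)` is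
`(y - s)⁺` for `s > 0` and `(s - y)⁺` for `s ≤ 0`. Integrate in `y` and swap the two integrals
(Tonelli); what remains is to compare the integrals of the hockey sticks `(· - s)⁺` and
`(s - ·)⁺`. These equal `(u_α(s) ± (mean α - s)) / 2`, which are ordered by hypothesis.
-/

open MeasureTheory Set
open scoped ENNReal Interval

theorem Monotone.ae_eq_stieltjesFunction {f : ℝ → ℝ} (hf : Monotone f) :
    f =ᵐ[volume] hf.stieltjesFunction := by
  rw [Filter.EventuallyEq, ae_iff]
  refine measure_mono_null ?_ (hf.countable_not_continuousAt.measure_zero volume)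
  intro t ht hcont
  exact ht hcont.continuousWithinAt.rightLim_eq.symm

theorem setLIntegral_measure_Ioc_left (M : Measure ℝ) [SFinite M] (a b : ℝ) :
    ∫⁻ t in Ioc a b, M (Ioc a t) = ∫⁻ s in Ioc a b, ENNReal.ofReal (b - s) ∂M := by
  have hS : MeasurableSet {p : ℝ × ℝ | p.2 ≤ p.1} := measurableSet_le measurable_snd measurable_fst
  convert (Measure.prod_apply hS).symm.trans
    (Measure.prod_apply_symm (μ := volume.restrict (Ioc a b)) (ν := M.restrict (Ioc a b)) hS)
    using 1
  · refine setLIntegral_congr_fun measurableSet_Ioc fun t ht => ?_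
    rw [Measure.restrict_apply' measurableSet_Ioc]
    congr 1
    ext s
    simp only [mem_Ioc, mem_inter_iff, mem_preimage, mem_ofPred_eq]
    grind
  · refine setLIntegral_congr_fun measurableSet_Ioc fun s hs => ?_
    rw [Measure.restrict_apply' measurableSet_Ioc, ← Real.volume_Icc]
    congr 1
    ext t
    simp only [mem_Ioc, mem_Icc, mem_inter_iff, mem_preimage, mem_ofPred_eq]
    grind

theorem setLIntegral_measure_Ioc_right (M : Measure ℝ) [SFinite M] (a b : ℝ) :
    ∫⁻ t in Ioc a b, M (Ioc t b) = ∫⁻ s in Ioc a b, ENNReal.ofReal (s - a) ∂M := by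
  have hS : MeasurableSet {p : ℝ × ℝ | p.1 < p.2} := measurableSet_lt measurable_fst measurable_snd
  convert (Measure.prod_apply hS).symm.trans
    (Measure.prod_apply_symm (μ := volume.restrict (Ioc a b)) (ν := M.restrict (Ioc a b)) hS)
    using 1
  · refine setLIntegral_congr_fun measurableSet_Ioc fun t ht => ?_
    rw [Measure.restrict_apply' measurableSet_Ioc]
    congr 1
    ext s
    simp only [mem_Ioc, mem_inter_iff, mem_preimage, mem_ofPred_eq]
    grind
  · refine setLIntegral_congr_fun measurableSet_Ioc fun s hs => ?_
    rw [Measure.restrict_apply' measurableSet_Ioc, ← Real.volume_Ioo]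
    congr 1
    ext t
    simp only [mem_Ioc, mem_Ioo, mem_inter_iff, mem_preimage, mem_ofPred_eq]
    grind

namespace StieltjesFunction

variable (f : StieltjesFunction ℝ) {a b : ℝ}

theorem ofReal_integral_sub_left (hab : a ≤ b) :
    ENNReal.ofReal (∫ t in a..b, (f t - f a))
      = ∫⁻ s in Ioc a b, ENNReal.ofReal (b - s) ∂f.measure := by
  rw [intervalIntegral.integral_of_le hab, ofReal_integral_eq_lintegral_ofReal
    ((f.mono.intervalIntegrable.sub intervalIntegrable_const).1)
    ((ae_restrict_iff' measurableSet_Ioc).2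
      (ae_of_all _ fun t ht => sub_nonneg.2 (f.mono ht.1.le))),
    ← setLIntegral_measure_Ioc_left]
  exact setLIntegral_congr_fun measurableSet_Ioc fun t _ => (f.measure_Ioc a t).symm

theorem ofReal_integral_sub_right (hab : a ≤ b) :
    ENNReal.ofReal (∫ t in a..b, (f b - f t))
      = ∫⁻ s in Ioc a b, ENNReal.ofReal (s - a) ∂f.measure := by
  rw [intervalIntegral.integral_of_le hab, ofReal_integral_eq_lintegral_ofReal
    ((intervalIntegrable_const.sub f.mono.intervalIntegrable).1)
    ((ae_restrict_iff' measurableSet_Ioc).2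
      (ae_of_all _ fun t ht => sub_nonneg.2 (f.mono ht.2))),
    ← setLIntegral_measure_Ioc_right]
  exact setLIntegral_congr_fun measurableSet_Ioc fun t _ => (f.measure_Ioc t b).symm

end StieltjesFunction

noncomputable def taylorKernel (y s : ℝ) : ℝ≥0∞ :=
  if 0 < s then ENNReal.ofReal (y - s) else ENNReal.ofReal (s - y)

theorem taylorKernel_of_nonneg {y : ℝ} (hy : 0 ≤ y) :
    taylorKernel y = (Ioc 0 y).indicator fun s => ENNReal.ofReal (y - s) := by
  ext s
  unfold taylorKernel indicator
  split_ifs <;> simp only [mem_Ioc, ENNReal.ofReal_eq_zero] at * <;> grind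

theorem taylorKernel_of_nonpos {y : ℝ} (hy : y ≤ 0) :
    taylorKernel y = (Ioc y 0).indicator fun s => ENNReal.ofReal (s - y) := by
  ext s
  unfold taylorKernel indicator
  split_ifs <;> simp only [mem_Ioc, ENNReal.ofReal_eq_zero] at * <;> grind

theorem measurable_taylorKernel : Measurable (Function.uncurry taylorKernel) :=
  Measurable.ite (measurableSet_lt measurable_const measurable_snd)
    (measurable_fst.sub measurable_snd).ennreal_ofReal
    (measurable_snd.sub measurable_fst).ennreal_ofReal

namespace ConvexOn

variable {φ : ℝ → ℝ} (hφ : ConvexOn ℝ univ φ)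

include hφ in
theorem monotone_rightDeriv : Monotone fun x => derivWithin φ (Ioi x) x := by
  simpa using hφ.monotoneOn_rightDeriv

include hφ in
theorem integral_rightDeriv (a b : ℝ) : ∫ t in a..b, derivWithin φ (Ioi t) t = φ b - φ a :=
  intervalIntegral.integral_eq_sub_of_hasDeriv_right
    ((hφ.continuousOn isOpen_univ).mono (subset_univ _))
    (fun _ _ => hφ.hasDerivWithinAt_rightDeriv_of_mem_interior (by simp))
    hφ.monotone_rightDeriv.intervalIntegrable

noncomputable def rightDerivStieltjes : StieltjesFunction ℝ :=
  hφ.monotone_rightDeriv.stieltjesFunction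

theorem integral_rightDerivStieltjes_sub (a b c : ℝ) :
    ∫ t in a..b, (hφ.rightDerivStieltjes t - hφ.rightDerivStieltjes c)
      = φ b - φ a - (b - a) * hφ.rightDerivStieltjes c := by
  have hae : ∀ᵐ t, t ∈ Ι a b → hφ.rightDerivStieltjes t = derivWithin φ (Ioi t) t :=
    hφ.monotone_rightDeriv.ae_eq_stieltjesFunction.mono fun _ ht _ => ht.symm
  rw [intervalIntegral.integral_sub hφ.rightDerivStieltjes.mono.intervalIntegrable
    intervalIntegrable_const, intervalIntegral.integral_congr_ae hae, hφ.integral_rightDeriv,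
    intervalIntegral.integral_const, smul_eq_mul]

theorem rightDerivStieltjes_mul_sub_le (x y : ℝ) :
    hφ.rightDerivStieltjes x * (y - x) ≤ φ y - φ x := by
  rcases le_total x y with hxy | hyx
  · have h := intervalIntegral.integral_nonneg (μ := volume) hxy fun t ht =>
      sub_nonneg.2 (hφ.rightDerivStieltjes.mono ht.1)
    rw [hφ.integral_rightDerivStieltjes_sub] at h
    linarith
  · have h := intervalIntegral.integral_nonneg (μ := volume) hyx fun t ht =>
      neg_nonneg.2 (sub_nonpos.2 (hφ.rightDerivStieltjes.mono ht.2))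
    rw [intervalIntegral.integral_neg, hφ.integral_rightDerivStieltjes_sub] at h
    linarith

theorem ofReal_sub_sub_mul_eq_lintegral_taylorKernel (y : ℝ) :
    ENNReal.ofReal (φ y - φ 0 - hφ.rightDerivStieltjes 0 * y)
      = ∫⁻ s, taylorKernel y s ∂hφ.rightDerivStieltjes.measure := by
  set γ := hφ.rightDerivStieltjes
  rcases le_total 0 y with hy | hy
  · rw [taylorKernel_of_nonneg hy, lintegral_indicator measurableSet_Ioc,
      ← γ.ofReal_integral_sub_left hy, hφ.integral_rightDerivStieltjes_sub, sub_zero, mul_comm]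
  · have h := hφ.integral_rightDerivStieltjes_sub y 0 0
    rw [taylorKernel_of_nonpos hy, lintegral_indicator measurableSet_Ioc,
      ← γ.ofReal_integral_sub_right hy]
    have h' : ∫ t in y..0, (γ 0 - γ t) = -∫ t in y..0, (γ t - γ 0) := by
      rw [← intervalIntegral.integral_neg]; simp_rw [neg_sub]
    rw [h', h]
    congr 1
    ring

end ConvexOn

theorem lintegral_ofReal_le_lintegral_ofReal_iff {α : Type*} [MeasurableSpace α]
    {μ ν : Measure α} {f : α → ℝ} (hf : 0 ≤ f) (hfμ : Integrable f μ) (hfν : Integrable f ν) :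
    ∫⁻ x, ENNReal.ofReal (f x) ∂μ ≤ ∫⁻ x, ENNReal.ofReal (f x) ∂ν ↔
      ∫ x, f x ∂μ ≤ ∫ x, f x ∂ν := by
  rw [← ofReal_integral_eq_lintegral_ofReal hfμ (ae_of_all _ hf),
    ← ofReal_integral_eq_lintegral_ofReal hfν (ae_of_all _ hf),
    ENNReal.ofReal_le_ofReal_iff (integral_nonneg hf)]

section PotentialOrder

variable {μ ν : Measure ℝ} [IsProbabilityMeasure μ] [IsProbabilityMeasure ν]
  (hμ : Integrable (fun x => x) μ) (hν : Integrable (fun x => x) ν)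
  (hpot : ∀ x, ∫ y, |x - y| ∂μ ≤ ∫ y, |x - y| ∂ν) (hmean : ∫ y, y ∂μ = ∫ y, y ∂ν)
include hμ hν hpot hmean

theorem lintegral_ofReal_mul_sub_le_of_potential_le {ε : ℝ} (hε : |ε| = 1) (s : ℝ) :
    ∫⁻ y, ENNReal.ofReal (ε * (y - s)) ∂μ ≤ ∫⁻ y, ENNReal.ofReal (ε * (y - s)) ∂ν := by
  -- `(|t| + t) / 2` is the positive part of `t = ε * (y - s)`
  have hpos : ∀ y,
      ENNReal.ofReal (ε * (y - s)) = ENNReal.ofReal ((|s - y| + ε * (y - s)) / 2) := by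
    intro y
    rw [abs_sub_comm, ← one_mul |y - s|, ← hε, ← abs_mul]
    rcases le_total 0 (ε * (y - s)) with h | h
    · rw [abs_of_nonneg h, add_self_div_two]
    · rw [abs_of_nonpos h, neg_add_cancel, zero_div, ENNReal.ofReal_of_nonpos h,
        ENNReal.ofReal_zero]
  have hint : ∀ (ρ : Measure ℝ) [IsProbabilityMeasure ρ], Integrable (fun y => y) ρ →
      Integrable (fun y => (|s - y| + ε * (y - s)) / 2) ρ ∧
        ∫ y, (|s - y| + ε * (y - s)) / 2 ∂ρ = (∫ y, |s - y| ∂ρ + ε * (∫ y, y ∂ρ - s)) / 2 := by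
    intro ρ _ hρ
    have hsub : Integrable (fun y => y - s) ρ := hρ.sub (integrable_const s)
    have habs : Integrable (fun y => |s - y|) ρ := ((integrable_const s).sub hρ).abs
    refine ⟨(habs.add (hsub.const_mul ε)).div_const 2, ?_⟩
    rw [integral_div, integral_add habs (hsub.const_mul ε), integral_const_mul,
      integral_sub hρ (integrable_const s), integral_const]
    simp
  have hnonneg : ∀ y, 0 ≤ (|s - y| + ε * (y - s)) / 2 := fun y => by
    have : |ε * (y - s)| = |s - y| := by rw [abs_mul, hε, one_mul, abs_sub_comm]
    linarith [neg_abs_le (ε * (y - s))]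
  simp_rw [hpos]
  rw [lintegral_ofReal_le_lintegral_ofReal_iff hnonneg (hint μ hμ).1 (hint ν hν).1,
    (hint μ hμ).2, (hint ν hν).2, hmean]
  linarith [hpot s]

theorem lintegral_taylorKernel_le_of_potential_le (s : ℝ) :
    ∫⁻ y, taylorKernel y s ∂μ ≤ ∫⁻ y, taylorKernel y s ∂ν := by
  unfold taylorKernel
  split_ifs
  · simpa using lintegral_ofReal_mul_sub_le_of_potential_le hμ hν hpot hmean (ε := 1) (by simp) s
  · simpa using lintegral_ofReal_mul_sub_le_of_potential_le hμ hν hpot hmean (ε := -1) (by simp) s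

theorem ConvexOn.integral_le_integral_of_potential_le {φ : ℝ → ℝ} (hφ : ConvexOn ℝ univ φ)
    (hφμ : Integrable φ μ) (hφν : Integrable φ ν) : ∫ x, φ x ∂μ ≤ ∫ x, φ x ∂ν := by
  set c := hφ.rightDerivStieltjes 0
  have hR : ∀ (ρ : Measure ℝ) [IsProbabilityMeasure ρ], Integrable φ ρ →
      Integrable (fun x => x) ρ → Integrable (fun y => φ y - φ 0 - c * y) ρ ∧
        ∫ y, (φ y - φ 0 - c * y) ∂ρ = ∫ y, φ y ∂ρ - φ 0 - c * ∫ y, y ∂ρ := by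
    intro ρ _ hφρ hρ
    have hshift : Integrable (fun y => φ y - φ 0) ρ := hφρ.sub (integrable_const _)
    have hlin : Integrable (fun y => c * y) ρ := hρ.const_mul c
    refine ⟨hshift.sub hlin, ?_⟩
    rw [integral_sub hshift hlin, integral_sub hφρ (integrable_const _), integral_const,
      integral_const_mul]
    simp
  have hK : ∫⁻ y, ∫⁻ s, taylorKernel y s ∂hφ.rightDerivStieltjes.measure ∂μ
      ≤ ∫⁻ y, ∫⁻ s, taylorKernel y s ∂hφ.rightDerivStieltjes.measure ∂ν := by
    rw [lintegral_lintegral_swap measurable_taylorKernel.aemeasurable,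
      lintegral_lintegral_swap measurable_taylorKernel.aemeasurable]
    exact lintegral_mono fun s => lintegral_taylorKernel_le_of_potential_le hμ hν hpot hmean s
  simp_rw [← hφ.ofReal_sub_sub_mul_eq_lintegral_taylorKernel] at hK
  rw [lintegral_ofReal_le_lintegral_ofReal_iff (fun y => sub_nonneg.2 ?_) (hR μ hφμ hμ).1
    (hR ν hφν hν).1, (hR μ hφμ hμ).2, (hR ν hφν hν).2, hmean] at hK
  · linarith
  · simpa using hφ.rightDerivStieltjes_mul_sub_le 0 y

end PotentialOrder

/-- For probability measures on `ℝ` with finite first moments, convex order holds iff the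
potential functions `u_α(x) = ∫|x-y| dα(y)` are ordered and the means coincide. -/
theorem stmt1 (μ ν : Measure ℝ) [IsProbabilityMeasure μ] [IsProbabilityMeasure ν]
    (hμ : Integrable (fun x => x) μ) (hν : Integrable (fun x => x) ν) :
    (∀ φ : ℝ → ℝ, ConvexOn ℝ Set.univ φ → Integrable φ μ → Integrable φ ν →
        ∫ x, φ x ∂μ ≤ ∫ x, φ x ∂ν)
      ↔ ((∀ x : ℝ, ∫ y, |x - y| ∂μ ≤ ∫ y, |x - y| ∂ν) ∧ (∫ y, y ∂μ = ∫ y, y ∂ν)) := by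
  constructor
  · intro H
    refine ⟨fun x => ?_, le_antisymm (H _ (convexOn_id convex_univ) hμ hν) ?_⟩
    · have hconv : ConvexOn ℝ univ fun y : ℝ => |x - y| := by
        simpa [Real.dist_eq, abs_sub_comm] using convexOn_univ_dist x
      exact H _ hconv ((integrable_const x).sub hμ).abs ((integrable_const x).sub hν).abs
    · have h := H (fun x => -x) (concaveOn_id convex_univ).neg hμ.neg hν.neg
      rwa [integral_neg, integral_neg, neg_le_neg_iff] at h
  · rintro ⟨hpot, hmean⟩ φ hφ hφμ hφν
    exact hφ.integral_le_integral_of_potential_le hμ hν hpot hmean hφμ hφν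
end

section
/- If π is a martingale coupling on ℝ^d × ℝ^d with disintegration (π_x) with respect to the first marginal, then for μ-almost every x, the point x lies in the relative interior of the closed convex hull of the support of π_x. -/
/-!
The barycenter `b = ∫ y ∂ρ` of a probability measure `ρ` lies in the closed convex set
`C = closure (convexHull ℝ ρ.support)`. If `b` were on the relative boundary of `C`, a supporting
functional `F` at `b` that is not constant on `C` would satisfy `F ≤ F b` on the support while
`∫ F dρ = F b`; so `F = F b` holds `ρ`-a.e., the support lies in the closed convex hyperplane
`{F = F b}`, and then so does `C`, contradicting the choice of `F`. Applied to `ρ = π_x`, whose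
barycenter is `x`, this is the theorem.
-/

open MeasureTheory

def msupport {α : Type*} [TopologicalSpace α] [MeasurableSpace α] (m : Measure α) : Set α :=
  {y | ∀ U : Set α, IsOpen U → y ∈ U → 0 < m U}

open Set

theorem Convex.exists_forall_le_and_lt_of_notMem_interior {E : Type*} [TopologicalSpace E]
    [AddCommGroup E] [Module ℝ E] [IsTopologicalAddGroup E] [ContinuousSMul ℝ E] {s : Set E}
    (hs : Convex ℝ s) (hs' : (interior s).Nonempty) {x : E} (hx : x ∉ interior s) :
    ∃ f : StrongDual ℝ E, (∀ y ∈ s, f y ≤ f x) ∧ ∃ y ∈ s, f y < f x := by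
  obtain ⟨f, hf⟩ := geometric_hahn_banach_open_point hs.interior isOpen_interior hx
  refine ⟨f, fun y hy => ?_, hs'.choose, interior_subset hs'.choose_spec, hf _ hs'.choose_spec⟩
  have hy' : y ∈ closure (interior s) :=
    hs.closure_interior_eq_closure_of_nonempty_interior hs' ▸ subset_closure hy
  exact closure_lt_subset_le f.continuous continuous_const (closure_mono hf hy')

theorem Convex.exists_forall_le_and_lt_of_notMem_intrinsicInterior {E : Type*}
    [NormedAddCommGroup E] [NormedSpace ℝ E] [FiniteDimensional ℝ E] {s : Set E}
    (hs : Convex ℝ s) {x : E} (hxs : x ∈ affineSpan ℝ s) (hx : x ∉ intrinsicInterior ℝ s) :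
    ∃ f : StrongDual ℝ E, (∀ y ∈ s, f y ≤ f x) ∧ ∃ y ∈ s, f y < f x := by
  -- In the direction `V` of the affine span, `s - x` has nonempty interior not containing `0`.
  set V := (affineSpan ℝ s).direction
  have : Nonempty (affineSpan ℝ s) := ⟨⟨x, hxs⟩⟩
  let e : V ≃ₜ affineSpan ℝ s :=
    (AffineIsometryEquiv.vaddConst ℝ (⟨x, hxs⟩ : affineSpan ℝ s)).toHomeomorph
  let t : Set V := {v | (v : E) + x ∈ s}
  have ht : e ⁻¹' ((↑) ⁻¹' s) = t := rfl
  have hts : Convex ℝ t := (hs.translate_preimage_left x).linear_preimage V.subtype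
  have h0 : (0 : V) ∉ interior t := by
    rw [← ht, ← e.preimage_interior]
    intro h
    exact hx ⟨e 0, h, by simp [e]⟩
  have hne : (interior t).Nonempty := by
    obtain ⟨_, y, hy, rfl⟩ :=
      (intrinsicInterior_nonempty hs).2 ((affineSpan_nonempty ℝ).1 ⟨x, hxs⟩)
    exact ⟨e.symm y, by rwa [← ht, ← e.preimage_interior, mem_preimage, e.apply_symm_apply]⟩
  obtain ⟨f, hle, v, hvt, hlt⟩ := hts.exists_forall_le_and_lt_of_notMem_interior hne h0
  obtain ⟨g, hg, -⟩ := exists_extension_norm_eq V f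
  refine ⟨g, fun y hy => ?_, v + x, hvt, by simpa [← hg] using hlt⟩
  have hyV : y - x ∈ V := (affineSpan ℝ s).vsub_mem_direction (subset_affineSpan ℝ s hy) hxs
  have := hle ⟨y - x, hyV⟩ (by simpa [t] using hy)
  rw [map_zero, ← hg] at this
  simpa [sub_nonpos] using this

theorem msupport_eq_support {α : Type*} [TopologicalSpace α] [MeasurableSpace α] (m : Measure α) :
    msupport m = m.support := by
  simp only [Measure.support_eq_forall_isOpen, msupport]
  grind

theorem ae_eq_integral_of_ae_le_integral {α : Type*} [MeasurableSpace α] {ρ : Measure α}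
    [IsProbabilityMeasure ρ] {f : α → ℝ} (hf : Integrable f ρ) (hle : ∀ᵐ y ∂ρ, f y ≤ ∫ z, f z ∂ρ) :
    ∀ᵐ y ∂ρ, f y = ∫ z, f z ∂ρ := by
  have h : ∫ y, (∫ z, f z ∂ρ) - f y ∂ρ = 0 := by
    simp [integral_sub (integrable_const _) hf]
  filter_upwards [(integral_eq_zero_iff_of_nonneg_ae (hle.mono fun y hy => sub_nonneg.2 hy)
    ((integrable_const _).sub hf)).1 h] with y hy
  exact (sub_eq_zero.1 hy).symm

theorem integral_mem_intrinsicInterior_closure_convexHull_support {E : Type*}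
    [NormedAddCommGroup E] [NormedSpace ℝ E] [FiniteDimensional ℝ E] [MeasurableSpace E]
    (ρ : Measure E) [IsProbabilityMeasure ρ] (hρ : Integrable (fun y => y) ρ) :
    ∫ y, y ∂ρ ∈ intrinsicInterior ℝ (closure (convexHull ℝ ρ.support)) := by
  set C := closure (convexHull ℝ ρ.support)
  have hC : Convex ℝ C := (convex_convexHull ℝ _).closure
  have hCρ : ∀ᵐ y ∂ρ, y ∈ C :=
    Filter.mem_of_superset ρ.support_mem_ae (subset_closure.trans' (subset_convexHull ℝ _))
  by_contra hb
  obtain ⟨F, hle, y, hyC, hlt⟩ := hC.exists_forall_le_and_lt_of_notMem_intrinsicInterior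
    (subset_affineSpan ℝ C (hC.integral_mem isClosed_closure hCρ hρ)) hb
  have hF : ∀ᵐ y ∂ρ, F y = F (∫ y, y ∂ρ) := by
    rw [← F.integral_comp_comm hρ] at hle ⊢
    exact ae_eq_integral_of_ae_le_integral (F.integrable_comp hρ) (hCρ.mono hle)
  have hHyp : IsClosed {y | F y = F (∫ y, y ∂ρ)} := isClosed_eq F.continuous continuous_const
  have hCF : C ⊆ {y | F y = F (∫ y, y ∂ρ)} :=
    closure_minimal (convexHull_min (ρ.support_subset_of_isClosed hHyp hF)
      (convex_hyperplane F.isLinear _)) hHyp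
  exact hlt.ne (hCF hyC)

theorem stmt3_general (d : ℕ) (μ ν : Measure (EuclideanSpace ℝ (Fin d)))
    (hν : Integrable (fun x => x) ν)
    (π : Measure (EuclideanSpace ℝ (Fin d) × EuclideanSpace ℝ (Fin d)))
    [IsProbabilityMeasure π]
    (h1 : π.map Prod.fst = μ) (h2 : π.map Prod.snd = ν)
    (hmart : ∀ᵐ x ∂μ, ∫ y, y ∂(π.condKernel x) = x) :
    ∀ᵐ x ∂μ, x ∈ intrinsicInterior ℝ
      (closure (convexHull ℝ (msupport (π.condKernel x)))) := by
  rw [← h2] at hν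
  have hπ : Integrable Prod.snd π :=
    (integrable_map_measure hν.aestronglyMeasurable measurable_snd.aemeasurable).1 hν
  have hint := hπ.condKernel_ae
  rw [Measure.fst, h1] at hint
  filter_upwards [hmart, hint] with x hx hintx
  simpa [msupport_eq_support, hx] using
    integral_mem_intrinsicInterior_closure_convexHull_support _ hintx

/-- For a martingale coupling `π` with disintegration `(π_x)`, for `μ`-a.e. `x` the point `x`
lies in the relative interior of the closed convex hull of the support of `π_x`. -/
theorem stmt3 (d : ℕ) (μ ν : Measure (EuclideanSpace ℝ (Fin d)))
    [IsProbabilityMeasure μ] [IsProbabilityMeasure ν]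
    (hμ : Integrable (fun x => x) μ) (hν : Integrable (fun x => x) ν)
    (π : Measure (EuclideanSpace ℝ (Fin d) × EuclideanSpace ℝ (Fin d)))
    [IsProbabilityMeasure π]
    (h1 : π.map Prod.fst = μ) (h2 : π.map Prod.snd = ν)
    (hmart : ∀ᵐ x ∂μ, ∫ y, y ∂(π.condKernel x) = x) :
    ∀ᵐ x ∂μ, x ∈ intrinsicInterior ℝ
      (closure (convexHull ℝ (msupport (π.condKernel x)))) :=
  stmt3_general d μ ν hν π h1 h2 hmart
end

section
/- Lipschitz kernel from monotone representation: Let f, and a real number y < y' be given, with f: ℝ → ℝ nondecreasing and integrable against Gaussians. Let π_x = law(f(G+y)) and π_{x'} = law(f(G+y')) where G ~ N(0,1), and set x = E[f(G+y)], x' = E[f(G+y')]. Then the 1-Wasserstein distance satisfies W₁(π_x, π_{x'}) ≤ x' − x. -/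
open MeasureTheory ProbabilityTheory

/-- The 1-Wasserstein distance between two measures on `ℝ`, as an infimum over couplings. -/
noncomputable def W1 (α β : Measure ℝ) : ℝ :=
  sInf {r | ∃ q : Measure (ℝ × ℝ), q.map Prod.fst = α ∧ q.map Prod.snd = β ∧
    r = ∫ p, |p.1 - p.2| ∂q}

theorem W1_le_integral_of_coupling (q : Measure (ℝ × ℝ)) :
    W1 (q.map Prod.fst) (q.map Prod.snd) ≤ ∫ p, |p.1 - p.2| ∂q :=
  csInf_le ⟨0, fun _ ⟨_, _, _, hr⟩ => hr ▸ integral_nonneg fun _ => abs_nonneg _⟩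
    ⟨q, rfl, rfl, rfl⟩

theorem W1_map_le_integral_abs_sub {Ω : Type*} [MeasurableSpace Ω] (P : Measure Ω)
    {X Y : Ω → ℝ} (hX : AEMeasurable X P) (hY : AEMeasurable Y P) :
    W1 (P.map X) (P.map Y) ≤ ∫ ω, |X ω - Y ω| ∂P := by
  have hXY : AEMeasurable (fun ω => (X ω, Y ω)) P := hX.prodMk hY
  have h := W1_le_integral_of_coupling (P.map fun ω => (X ω, Y ω))
  rwa [← Measure.fst, ← Measure.snd, Measure.fst_map_prodMk₀ hY, Measure.snd_map_prodMk₀ hX,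
    integral_map hXY (by fun_prop)] at h

/-- A coupling of two ordered random variables costs exactly the difference of their means. -/
theorem W1_map_le_integral_sub_of_ae_le {Ω : Type*} [MeasurableSpace Ω] (P : Measure Ω)
    {X Y : Ω → ℝ} (hX : Integrable X P) (hY : Integrable Y P) (hXY : X ≤ᵐ[P] Y) :
    W1 (P.map X) (P.map Y) ≤ (∫ ω, Y ω ∂P) - ∫ ω, X ω ∂P := by
  calc W1 (P.map X) (P.map Y) ≤ ∫ ω, |X ω - Y ω| ∂P :=
        W1_map_le_integral_abs_sub P hX.aemeasurable hY.aemeasurable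
    _ = ∫ ω, Y ω - X ω ∂P := integral_congr_ae <| hXY.mono fun ω h => by
        simp only [abs_sub_comm (X ω), abs_of_nonneg (sub_nonneg.mpr h)]
    _ = (∫ ω, Y ω ∂P) - ∫ ω, X ω ∂P := integral_sub hY hX

theorem stmt11_general {Ω : Type*} [MeasurableSpace Ω] (P : Measure Ω)
    (G : Ω → ℝ)
    (f : ℝ → ℝ) (hf : Monotone f) (y y' : ℝ) (hyy' : y < y')
    (h1 : Integrable (fun ω => f (G ω + y)) P)
    (h2 : Integrable (fun ω => f (G ω + y')) P) :
    W1 (P.map fun ω => f (G ω + y)) (P.map fun ω => f (G ω + y'))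
      ≤ (∫ ω, f (G ω + y') ∂P) - ∫ ω, f (G ω + y) ∂P :=
  W1_map_le_integral_sub_of_ae_le P h1 h2 <|
    ae_of_all P fun ω => hf (add_le_add_right hyy'.le (G ω))

/-- Lipschitz kernel from a monotone representation: with `π_x = law f(G+y)`,
`π_{x'} = law f(G+y')`, `x = E[f(G+y)]`, `x' = E[f(G+y')]` and `y < y'`, one has
`W₁(π_x, π_{x'}) ≤ x' − x`. -/
theorem stmt11 {Ω : Type*} [MeasurableSpace Ω] (P : Measure Ω) [IsProbabilityMeasure P]
    (G : Ω → ℝ) (hG : Measurable G) (hlaw : P.map G = gaussianReal 0 1)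
    (f : ℝ → ℝ) (hf : Monotone f) (y y' : ℝ) (hyy' : y < y')
    (h1 : Integrable (fun ω => f (G ω + y)) P)
    (h2 : Integrable (fun ω => f (G ω + y')) P) :
    W1 (P.map fun ω => f (G ω + y)) (P.map fun ω => f (G ω + y'))
      ≤ (∫ ω, f (G ω + y') ∂P) - ∫ ω, f (G ω + y) ∂P :=
  stmt11_general P G f hf y y' hyy' h1 h2
end

section
/- Decomposition of one-dimensional martingale couplings: let μ ⪯_c ν on ℝ and let I be one of the open components of the set {u_μ < u_ν}. Then every martingale coupling π ∈ M(μ,ν) satisfies π(I × ℝ) = π(I × Ī), i.e. mass starting in I stays in the closure of I. -/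
open MeasureTheory

lemma absConvex (x : ℝ) : ConvexOn ℝ Set.univ (fun y => |x - y|) := by
  refine ⟨convex_univ, fun a _ b _ s t hs ht hst => ?_⟩
  simp only [smul_eq_mul]
  have h : x - (s * a + t * b) = s * (x - a) + t * (x - b) := by
    linear_combination x * hst.symm
  rw [h]
  calc |s * (x - a) + t * (x - b)| ≤ |s * (x - a)| + |t * (x - b)| := abs_add_le _ _
    _ = s * |x - a| + t * |x - b| := by
        rw [abs_mul, abs_mul, abs_of_nonneg hs, abs_of_nonneg ht]

lemma absInt (x : ℝ) (m : Measure ℝ) [IsFiniteMeasure m] (hm : Integrable (fun z => z) m) :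
    Integrable (fun y => |x - y|) m := ((integrable_const x).sub hm).abs

lemma uCont (m : Measure ℝ) [IsProbabilityMeasure m] (hm : Integrable (fun z => z) m) :
    Continuous (fun x => ∫ y, |x - y| ∂m) := by
  refine (LipschitzWith.continuous (K := 1) ?_)
  rw [lipschitzWith_iff_dist_le_mul]
  intro a b
  rw [Real.dist_eq, Real.dist_eq]; push_cast; rw [one_mul]
  rw [← integral_sub (absInt a m hm) (absInt b m hm)]
  calc |∫ y, (|a - y| - |b - y|) ∂m| ≤ ∫ y, |(|a - y| - |b - y|)| ∂m := by
        simpa [Real.norm_eq_abs] using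
          norm_integral_le_integral_norm (μ := m) (fun y => |a - y| - |b - y|)
    _ ≤ ∫ _y, |a - b| ∂m := by
        refine integral_mono ((absInt a m hm).sub (absInt b m hm)).abs (integrable_const _)
          fun y => ?_
        calc |(|a - y| - |b - y|)| ≤ |(a - y) - (b - y)| := abs_abs_sub_abs_le_abs_sub _ _
          _ = |a - b| := by ring_nf
    _ = |a - b| := by simp



lemma keyLemma (μ : Measure ℝ) [IsProbabilityMeasure μ]
    (hμ : Integrable (fun z => z) μ)
    (π : Measure (ℝ × ℝ)) [IsProbabilityMeasure π]
    (h1 : π.map Prod.fst = μ)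
    (hsnd : Integrable (fun p : ℝ × ℝ => p.2) π)
    (hmart : ∀ᵐ x ∂μ, ∫ y, y ∂π.condKernel x = x)
    (b : ℝ) (hb : ∫ x, |b - x| ∂μ = ∫ p, |b - p.2| ∂π) :
    ∀ᵐ x ∂μ, (x < b → π.condKernel x (Set.Ioi b) = 0) ∧
      (b < x → π.condKernel x (Set.Iio b) = 0) := by
  have hfst : π.fst = μ := h1
  have hintf : Integrable (fun p : ℝ × ℝ => |b - p.2|) π := ((integrable_const b).sub hsnd).abs
  have hIK : ∀ᵐ x ∂μ, Integrable (fun y => |b - y|) (π.condKernel x) := by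
    have := hintf.condKernel_ae; rwa [hfst] at this
  have hIy : ∀ᵐ x ∂μ, Integrable (fun y => y) (π.condKernel x) := by
    have := hsnd.condKernel_ae; rwa [hfst] at this
  have hInt1 : Integrable (fun x => ∫ y, |b - y| ∂π.condKernel x) μ := by
    have := hintf.integral_norm_condKernel
    rw [hfst] at this
    simpa [Real.norm_eq_abs, abs_abs] using this
  have htot : ∫ x, ∫ y, |b - y| ∂π.condKernel x ∂μ = ∫ p, |b - p.2| ∂π := by
    conv_rhs => rw [← Measure.integral_condKernel hintf]
    rw [hfst]
  have hJ : ∀ᵐ x ∂μ, |b - x| ≤ ∫ y, |b - y| ∂π.condKernel x := by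
    filter_upwards [hmart, hIy] with x hx hy
    have h2' : ∫ y, (b - y) ∂π.condKernel x = b - x := by
      rw [integral_sub (integrable_const b) hy, hx, integral_const]; simp
    calc |b - x| = |∫ y, (b - y) ∂π.condKernel x| := by rw [h2']
      _ ≤ ∫ y, |b - y| ∂π.condKernel x := by
          simpa [Real.norm_eq_abs] using
            norm_integral_le_integral_norm (μ := π.condKernel x) (fun y => b - y)
  have hg0 : 0 ≤ᵐ[μ] fun x => ∫ y, |b - y| ∂π.condKernel x - |b - x| :=
    hJ.mono fun x h => sub_nonneg.mpr h
  have hgint : Integrable (fun x => ∫ y, |b - y| ∂π.condKernel x - |b - x|) μ :=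
    hInt1.sub (absInt b μ hμ)
  have hg : ∫ x, (∫ y, |b - y| ∂π.condKernel x - |b - x|) ∂μ = 0 := by
    rw [integral_sub hInt1 (absInt b μ hμ), htot, hb, sub_self]
  have hae := (integral_eq_zero_iff_of_nonneg_ae hg0 hgint).mp hg
  filter_upwards [hae, hmart, hIy, hIK] with x hx hmx hyx hax
  have heqx : ∫ y, |b - y| ∂π.condKernel x = |b - x| := by
    have : ∫ y, |b - y| ∂π.condKernel x - |b - x| = 0 := hx
    linarith
  have hby : ∫ y, (b - y) ∂π.condKernel x = b - x := by
    rw [integral_sub (integrable_const b) hyx, hmx, integral_const]; simp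
  have hsubint : Integrable (fun y => b - y) (π.condKernel x) := (integrable_const b).sub hyx
  constructor
  · intro hxb
    have h0 : ∫ y, (|b - y| - (b - y)) ∂π.condKernel x = 0 := by
      rw [integral_sub hax hsubint, heqx, hby,
        abs_of_nonneg (le_of_lt (sub_pos.mpr hxb)), sub_self]
    have hnn : 0 ≤ᵐ[π.condKernel x] fun y => |b - y| - (b - y) :=
      ae_of_all _ fun y => sub_nonneg.mpr (le_abs_self _)
    have h01 := (integral_eq_zero_iff_of_nonneg_ae hnn
      (hax.sub hsubint)).mp h0
    have hle : ∀ᵐ y ∂π.condKernel x, y ≤ b := by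
      filter_upwards [h01] with y hy
      have h2 : |b - y| = b - y := by
        have : |b - y| - (b - y) = 0 := hy
        linarith
      have := abs_eq_self.mp h2
      linarith
    have : π.condKernel x {y | ¬ y ≤ b} = 0 := hle
    simpa [Set.Ioi, not_le] using this
  · intro hxb
    have h0 : ∫ y, (|b - y| + (b - y)) ∂π.condKernel x = 0 := by
      rw [integral_add hax hsubint, heqx, hby,
        abs_of_nonpos (le_of_lt (sub_neg.mpr hxb))]
      ring
    have hnn : 0 ≤ᵐ[π.condKernel x] fun y => |b - y| + (b - y) :=
      ae_of_all _ fun y => by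
        have := neg_abs_le (b - y); simp only [Pi.zero_apply]; linarith
    have h01 := (integral_eq_zero_iff_of_nonneg_ae hnn
      (hax.add hsubint)).mp h0
    have hle : ∀ᵐ y ∂π.condKernel x, b ≤ y := by
      filter_upwards [h01] with y hy
      have h2 : |b - y| = -(b - y) := by
        have : |b - y| + (b - y) = 0 := hy
        linarith
      have := abs_eq_neg_self.mp h2
      linarith
    have : π.condKernel x {y | ¬ b ≤ y} = 0 := hle
    simpa [Set.Iio, not_le] using this


/-- Decomposition of one-dimensional martingale couplings: if `I` is a connected component of
`{u_μ < u_ν}`, then any martingale coupling of `μ ⪯_c ν` sends mass starting in `I` into the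
closure of `I`. -/
theorem stmt18 (μ ν : Measure ℝ) [IsProbabilityMeasure μ] [IsProbabilityMeasure ν]
    (hμ : Integrable (fun x => x) μ) (hν : Integrable (fun x => x) ν)
    (hcx : ∀ φ : ℝ → ℝ, ConvexOn ℝ Set.univ φ → Integrable φ μ → Integrable φ ν →
      ∫ x, φ x ∂μ ≤ ∫ x, φ x ∂ν)
    (U : Set ℝ) (hU : U = {x | ∫ y, |x - y| ∂μ < ∫ y, |x - y| ∂ν})
    (I : Set ℝ) (hI : ∃ x₀ ∈ U, I = connectedComponentIn U x₀)
    (π : Measure (ℝ × ℝ)) [IsProbabilityMeasure π]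
    (h1 : π.map Prod.fst = μ) (h2 : π.map Prod.snd = ν)
    (hmart : ∀ᵐ x ∂μ, ∫ y, y ∂π.condKernel x = x) :
    π (I ×ˢ (Set.univ : Set ℝ)) = π (I ×ˢ closure I) := by
  obtain ⟨x₀, hx₀U, hIdef⟩ := hI
  have hUopen : IsOpen U := by
    rw [hU]; exact isOpen_lt (uCont μ hμ) (uCont ν hν)
  have hIopen : IsOpen I := hIdef ▸ hUopen.connectedComponentIn
  have hIsub : I ⊆ U := hIdef ▸ connectedComponentIn_subset U x₀
  have hIne : I.Nonempty := ⟨x₀, hIdef ▸ mem_connectedComponentIn hx₀U⟩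
  have hIpc : IsPreconnected I := hIdef ▸ isPreconnected_connectedComponentIn
  have hord : I.OrdConnected := hIpc.ordConnected
  have hle : ∀ x : ℝ, ∫ y, |x - y| ∂μ ≤ ∫ y, |x - y| ∂ν := fun x =>
    hcx _ (absConvex x) (absInt x μ hμ) (absInt x ν hν)
  have hbdry : ∀ c : ℝ, c ∈ closure I → c ∉ I → ∫ y, |c - y| ∂μ = ∫ y, |c - y| ∂ν := by
    intro c hcc hcI
    have hcU : c ∉ U := by
      intro hcU
      have hopen : IsOpen (connectedComponentIn U c) := hUopen.connectedComponentIn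
      obtain ⟨z, hz1, hz2⟩ :=
        _root_.mem_closure_iff.mp hcc _ hopen (mem_connectedComponentIn hcU)
      have e1 : connectedComponentIn U c = connectedComponentIn U z :=
        connectedComponentIn_eq hz1
      have e2 : I = connectedComponentIn U z := by
        rw [hIdef]; exact connectedComponentIn_eq (hIdef ▸ hz2)
      exact hcI (e2 ▸ e1 ▸ mem_connectedComponentIn hcU)
    rw [hU] at hcU
    exact le_antisymm (hle c) (not_lt.mp hcU)
  have hsnd : Integrable (fun p : ℝ × ℝ => p.2) π := by
    have h : Integrable (fun x : ℝ => x) (π.map Prod.snd) := h2 ▸ hν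
    exact (integrable_map_measure aestronglyMeasurable_id
      measurable_snd.aemeasurable).mp h
  have hν2 : ∀ c : ℝ, ∫ y, |c - y| ∂ν = ∫ p : ℝ × ℝ, |c - p.2| ∂π := by
    intro c
    have hm : AEStronglyMeasurable (fun y : ℝ => |c - y|) (π.map Prod.snd) :=
      (measurable_const.sub measurable_id).abs.aestronglyMeasurable
    rw [← h2, integral_map measurable_snd.aemeasurable hm]
  have key : ∀ c : ℝ, c ∈ closure I → c ∉ I →
      ∀ᵐ x ∂μ, (x < c → π.condKernel x (Set.Ioi c) = 0) ∧
        (c < x → π.condKernel x (Set.Iio c) = 0) := fun c h1c h2c =>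
    keyLemma μ hμ π h1 hsnd hmart c (by rw [hbdry c h1c h2c, hν2 c])
  have hImeas : MeasurableSet I := hIopen.measurableSet
  have final : (∀ᵐ x ∂μ, x ∈ I → π.condKernel x ((closure I)ᶜ) = 0) →
      π (I ×ˢ (Set.univ : Set ℝ)) = π (I ×ˢ closure I) := by
    intro hS
    have hfst : π.fst = μ := h1
    rw [← Measure.setLIntegral_condKernel_eq_measure_prod hImeas MeasurableSet.univ,
      ← Measure.setLIntegral_condKernel_eq_measure_prod hImeas
        isClosed_closure.measurableSet, hfst]
    refine lintegral_congr_ae ?_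
    rw [Filter.EventuallyEq, ae_restrict_iff' hImeas]
    filter_upwards [hS] with x hx hxI
    have h := measure_add_measure_compl (μ := π.condKernel x) (s := closure I)
      isClosed_closure.measurableSet
    rw [hx hxI, add_zero] at h
    exact h.symm
  by_cases hA : BddAbove I
  · have hbC : sSup I ∈ closure I := csSup_mem_closure hIne hA
    have hbI : sSup I ∉ I := by
      intro h
      obtain ⟨ε, hε, hball⟩ := Metric.isOpen_iff.mp hIopen _ h
      have hd : dist (sSup I + ε/2) (sSup I) < ε := by
        rw [Real.dist_eq]
        have h3 : sSup I + ε/2 - sSup I = ε/2 := by ring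
        rw [h3, abs_of_nonneg (by linarith)]; linarith
      have := le_csSup hA (hball (Metric.mem_ball.mpr hd))
      linarith
    by_cases hB : BddBelow I
    · have haC : sInf I ∈ closure I := csInf_mem_closure hIne hB
      have haI : sInf I ∉ I := by
        intro h
        obtain ⟨ε, hε, hball⟩ := Metric.isOpen_iff.mp hIopen _ h
        have hd : dist (sInf I - ε/2) (sInf I) < ε := by
          rw [Real.dist_eq]
          have h3 : sInf I - ε/2 - sInf I = -(ε/2) := by ring
          rw [h3, abs_neg, abs_of_nonneg (by linarith)]; linarith
        have := csInf_le hB (hball (Metric.mem_ball.mpr hd))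
        linarith
      refine final ?_
      filter_upwards [key _ haC haI, key _ hbC hbI] with x hxa hxb hxI
      have hax : sInf I < x := lt_of_le_of_ne (csInf_le hB hxI) fun h => haI (h ▸ hxI)
      have hxbb : x < sSup I := lt_of_le_of_ne (le_csSup hA hxI) fun h => hbI (h ▸ hxI)
      have hsub : (closure I)ᶜ ⊆ Set.Iio (sInf I) ∪ Set.Ioi (sSup I) := by
        intro y hy
        by_contra hcon
        simp only [Set.mem_union, Set.mem_Iio, Set.mem_Ioi, not_or, not_lt] at hcon
        obtain ⟨h1y, h2y⟩ := hcon
        apply hy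
        rcases eq_or_lt_of_le h1y with h | h
        · exact h ▸ haC
        rcases eq_or_lt_of_le h2y with h | h'
        · exact h.symm ▸ hbC
        obtain ⟨z1, hz1I, hz1⟩ := exists_lt_of_csInf_lt hIne h
        obtain ⟨z2, hz2I, hz2⟩ := exists_lt_of_lt_csSup hIne h'
        exact subset_closure (hord.out hz1I hz2I ⟨le_of_lt hz1, le_of_lt hz2⟩)
      exact measure_mono_null hsub
        (measure_union_null (hxa.2 hax) (hxb.1 hxbb))
    · refine final ?_
      filter_upwards [key _ hbC hbI] with x hxb hxI
      have hxbb : x < sSup I := lt_of_le_of_ne (le_csSup hA hxI) fun h => hbI (h ▸ hxI)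
      have hsub : (closure I)ᶜ ⊆ Set.Ioi (sSup I) := by
        intro y hy
        by_contra hcon
        simp only [Set.mem_Ioi, not_lt] at hcon
        apply hy
        rcases eq_or_lt_of_le hcon with h | h'
        · exact h.symm ▸ hbC
        obtain ⟨z1, hz1I, hz1⟩ := not_bddBelow_iff.mp hB y
        obtain ⟨z2, hz2I, hz2⟩ := exists_lt_of_lt_csSup hIne h'
        exact subset_closure (hord.out hz1I hz2I ⟨le_of_lt hz1, le_of_lt hz2⟩)
      exact measure_mono_null hsub (hxb.1 hxbb)
  · by_cases hB : BddBelow I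
    · have haC : sInf I ∈ closure I := csInf_mem_closure hIne hB
      have haI : sInf I ∉ I := by
        intro h
        obtain ⟨ε, hε, hball⟩ := Metric.isOpen_iff.mp hIopen _ h
        have hd : dist (sInf I - ε/2) (sInf I) < ε := by
          rw [Real.dist_eq]
          have h3 : sInf I - ε/2 - sInf I = -(ε/2) := by ring
          rw [h3, abs_neg, abs_of_nonneg (by linarith)]; linarith
        have := csInf_le hB (hball (Metric.mem_ball.mpr hd))
        linarith
      refine final ?_
      filter_upwards [key _ haC haI] with x hxa hxI
      have hax : sInf I < x := lt_of_le_of_ne (csInf_le hB hxI) fun h => haI (h ▸ hxI)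
      have hsub : (closure I)ᶜ ⊆ Set.Iio (sInf I) := by
        intro y hy
        by_contra hcon
        simp only [Set.mem_Iio, not_lt] at hcon
        apply hy
        rcases eq_or_lt_of_le hcon with h | h
        · exact h ▸ haC
        obtain ⟨z1, hz1I, hz1⟩ := exists_lt_of_csInf_lt hIne h
        obtain ⟨z2, hz2I, hz2⟩ := not_bddAbove_iff.mp hA y
        exact subset_closure (hord.out hz1I hz2I ⟨le_of_lt hz1, le_of_lt hz2⟩)
      exact measure_mono_null hsub (hxa.2 hax)
    · have hIuniv : I = Set.univ := Set.eq_univ_of_forall fun y => by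
        obtain ⟨z1, hz1I, hz1⟩ := not_bddBelow_iff.mp hB y
        obtain ⟨z2, hz2I, hz2⟩ := not_bddAbove_iff.mp hA y
        exact hord.out hz1I hz2I ⟨le_of_lt hz1, le_of_lt hz2⟩
      rw [hIuniv, closure_univ]
end

section
/- Bicausal couplings of martingales are martingales: if P and Q are laws on path space C([0,1];ℝ^d) under which the canonical process is a martingale (in its completed canonical filtration), and π is a bicausal coupling of P and Q, then the ℝ^{2d}-valued canonical process (ω, ω̄) on the product path space is a π-martingale in its own (product-canonical) filtration. -/
open MeasureTheory unitInterval
open scoped NNReal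

noncomputable section

/-- The path space `C([0,1]; ℝ^d)` with the Borel σ-algebra of the uniform topology. -/
abbrev PathSp (d : ℕ) := C(I, EuclideanSpace ℝ (Fin d))

instance (d : ℕ) : MeasurableSpace (PathSp d) := borel _
instance (d : ℕ) : BorelSpace (PathSp d) := ⟨rfl⟩

/-- The canonical filtration on path space: `F_t` is generated by the evaluations up to `t`. -/
def canonF (d : ℕ) : Filtration I (inferInstance : MeasurableSpace (PathSp d)) where
  seq t := ⨆ s ∈ Set.Iic t, MeasurableSpace.comap (fun ω : PathSp d => ω s) inferInstance
  mono' s t hst := biSup_mono fun u hu => Set.mem_Iic.mpr ((Set.mem_Iic.mp hu).trans hst)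
  le' t := iSup₂_le fun s _ =>
    (continuous_eval_const s).measurable.comap_le

/-- The product filtration `F_t ⊗ F_t` on `Ω × Ω`. -/
def prodF (d : ℕ) : Filtration I (inferInstance : MeasurableSpace (PathSp d × PathSp d)) where
  seq t := MeasurableSpace.comap Prod.fst (canonF d t) ⊔
    MeasurableSpace.comap Prod.snd (canonF d t)
  mono' s t hst := sup_le_sup (MeasurableSpace.comap_mono ((canonF d).mono hst))
    (MeasurableSpace.comap_mono ((canonF d).mono hst))
  le' t := sup_le_sup (MeasurableSpace.comap_mono ((canonF d).le t))
    (MeasurableSpace.comap_mono ((canonF d).le t))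

/-- A coupling `π` of path-measures (first marginal `P`) is causal if for each `t` and each
`F_t`-measurable `A`, the map `x ↦ π_x(A)` is measurable for the `P`-completion of `F_t`,
i.e. coincides `P`-a.e. with an `F_t`-measurable function. -/
def Causal (d : ℕ) [StandardBorelSpace (PathSp d)] [Nonempty (PathSp d)]
    (P : Measure (PathSp d)) (π : Measure (PathSp d × PathSp d)) [IsFiniteMeasure π] : Prop :=
  ∀ t : I, ∀ A : Set (PathSp d), MeasurableSet[canonF d t] A →
    ∃ g : PathSp d → ENNReal, Measurable[canonF d t] g ∧
      (fun x => π.condKernel x A) =ᵐ[P] g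

/-! Disintegrate `π = P ⊗ κ`. For `A, B ∈ F_s` one has `∫_{A×B} h(ω) dπ = ∫_A κ_ω(B) h(ω) dP`,
and causality makes `ω ↦ κ_ω(B)` `F_s`-measurable modulo `P`; by the pull-out property `h` may
then be replaced by `E_P[h | F_s]`. A Dynkin-system argument extends this from rectangles to
`F_s ⊗ F_s`, i.e. `E_π[h(ω) | F_s ⊗ F_s] = E_P[h | F_s](ω)`. For `h = ω_t` this is the martingale
property of the first coordinate; the second follows in the same way from the causality of the
swapped coupling. -/

open scoped ENNReal

variable {α β E : Type*} [NormedAddCommGroup E] [NormedSpace ℝ E]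

theorem setIntegral_eq_of_isPiSystem {m mα : MeasurableSpace α} {C : Set (Set α)}
    (hm : m ≤ mα) (hgen : m = MeasurableSpace.generateFrom C) (hC : IsPiSystem C)
    {μ : Measure α} {f g : α → E} (hf : Integrable f μ) (hg : Integrable g μ)
    (huniv : ∫ x, f x ∂μ = ∫ x, g x ∂μ) (hCfg : ∀ s ∈ C, ∫ x in s, f x ∂μ = ∫ x in s, g x ∂μ)
    {s : Set α} (hs : MeasurableSet[m] s) :
    ∫ x in s, f x ∂μ = ∫ x in s, g x ∂μ := by
  induction s, hs using MeasurableSpace.induction_on_inter hgen hC with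
  | empty => simp
  | basic s hs => exact hCfg s hs
  | compl s hs ih =>
    have hf' := integral_add_compl (hm s hs) hf
    have hg' := integral_add_compl (hm s hs) hg
    rw [ih, huniv, ← hg'] at hf'
    exact add_left_cancel hf'
  | iUnion s hdisj hs ih =>
    exact (hasSum_integral_iUnion (fun i => hm _ (hs i)) hdisj hf.integrableOn).unique
      ((hasSum_integral_iUnion (fun i => hm _ (hs i)) hdisj hg.integrableOn).congr_fun ih)

variable [CompleteSpace E]

theorem setIntegral_smul_condExp {m mα : MeasurableSpace α} (hm : m ≤ mα) {μ : Measure α}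
    [SigmaFinite (μ.trim hm)] {φ : α → ℝ} {f : α → E} (hφ : AEStronglyMeasurable[m] φ μ)
    (hφf : Integrable (φ • f) μ) (hf : Integrable f μ) {s : Set α} (hs : MeasurableSet[m] s) :
    ∫ x in s, φ x • μ[f|m] x ∂μ = ∫ x in s, φ x • f x ∂μ := by
  refine (setIntegral_congr_ae (hm s hs) ?_).trans (setIntegral_condExp hm hφf hs)
  exact (condExp_smul_of_aestronglyMeasurable_left hφ hφf hf).mono fun x hx _ => hx.symm

def IsCausal (mA : MeasurableSpace α) (mB : MeasurableSpace β) [MeasurableSpace α]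
    [MeasurableSpace β] [StandardBorelSpace β] [Nonempty β] (π : Measure (α × β))
    [IsFiniteMeasure π] : Prop :=
  ∀ B, MeasurableSet[mB] B →
    ∃ g : α → ℝ≥0∞, Measurable[mA] g ∧ (fun x => π.condKernel x B) =ᵐ[π.fst] g

variable {mA mα : MeasurableSpace α} {mB mβ : MeasurableSpace β}

def MeasureTheory.Filtration.prod {ι : Type*} [Preorder ι] (𝓕 : Filtration ι mα)
    (𝓖 : Filtration ι mβ) : Filtration ι (mα.prod mβ) where
  seq i := (𝓕 i).prod (𝓖 i)
  mono' _ _ hij := sup_le_sup (MeasurableSpace.comap_mono (𝓕.mono hij))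
    (MeasurableSpace.comap_mono (𝓖.mono hij))
  le' i := sup_le_sup (MeasurableSpace.comap_mono (𝓕.le i)) (MeasurableSpace.comap_mono (𝓖.le i))

section

variable [StandardBorelSpace β] [Nonempty β]

theorem setIntegral_prod_comp_fst (π : Measure (α × β)) [IsFiniteMeasure π] {A : Set α}
    {B : Set β} (hA : MeasurableSet A) (hB : MeasurableSet B) {f : α → E}
    (hf : Integrable f π.fst) :
    ∫ p in A ×ˢ B, f p.1 ∂π = ∫ x in A, (π.condKernel x).real B • f x ∂π.fst := by
  conv_lhs => rw [← π.disintegrate π.condKernel]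
  rw [Measure.setIntegral_compProd hA hB]
  · simp_rw [setIntegral_const]
  · rw [π.disintegrate π.condKernel]
    exact (hf.comp_measurable measurable_fst).integrableOn

theorem setIntegral_comp_fst_condExp {π : Measure (α × β)} [IsFiniteMeasure π]
    (hmA : mA ≤ mα) (hmB : mB ≤ mβ)
    (hπ : IsCausal mA mB π) {h : α → E} (hh : Integrable h π.fst) {S : Set (α × β)}
    (hS : MeasurableSet[mA.prod mB] S) :
    ∫ p in S, π.fst[h|mA] p.1 ∂π = ∫ p in S, h p.1 ∂π := by
  have hk : Integrable (π.fst[h|mA]) π.fst := integrable_condExp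
  refine setIntegral_eq_of_isPiSystem (sup_le_sup (MeasurableSpace.comap_mono hmA)
    (MeasurableSpace.comap_mono hmB)) (@generateFrom_prod _ _ mA mB).symm
    (@isPiSystem_prod _ _ mA mB)
    (hk.comp_measurable measurable_fst) (hh.comp_measurable measurable_fst) ?_ ?_ hS
  · exact (integral_map measurable_fst.aemeasurable hk.1).symm.trans
      ((integral_condExp hmA).trans (integral_map measurable_fst.aemeasurable hh.1))
  rintro _ ⟨A, hA, B, hB, rfl⟩
  obtain ⟨g, hg, hgπ⟩ := hπ B hB
  have hφ : AEStronglyMeasurable[mA] (fun x => (π.condKernel x).real B) π.fst :=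
    ⟨fun x => (g x).toReal, hg.ennreal_toReal.stronglyMeasurable,
      hgπ.mono fun x hx => by simp [Measure.real, hx]⟩
  have hφh : Integrable ((fun x => (π.condKernel x).real B) • h) π.fst :=
    hh.bdd_smul 1 (hφ.mono hmA) (Filter.Eventually.of_forall fun x => by
      simp [abs_of_nonneg measureReal_nonneg, measureReal_le_one])
  calc ∫ p in A ×ˢ B, π.fst[h|mA] p.1 ∂π
      = ∫ x in A, (π.condKernel x).real B • π.fst[h|mA] x ∂π.fst :=
        setIntegral_prod_comp_fst π (hmA A hA) (hmB B hB) hk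
    _ = ∫ x in A, (π.condKernel x).real B • h x ∂π.fst :=
        setIntegral_smul_condExp hmA hφ hφh hh hA
    _ = ∫ p in A ×ˢ B, h p.1 ∂π := (setIntegral_prod_comp_fst π (hmA A hA) (hmB B hB) hh).symm

end

theorem setIntegral_comp_snd_condExp [StandardBorelSpace α] [Nonempty α]
    {π : Measure (α × β)} [IsFiniteMeasure π] (hmA : mA ≤ mα) (hmB : mB ≤ mβ)
    (hπ : IsCausal mB mA (π.map Prod.swap)) {h : β → E} (hh : Integrable h π.snd)
    {S : Set (α × β)} (hS : MeasurableSet[mA.prod mB] S) :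
    ∫ p in S, π.snd[h|mB] p.2 ∂π = ∫ p in S, h p.2 ∂π := by
  have hswap (f : β → E) :
      ∫ p in S, f p.2 ∂π = ∫ q in Prod.swap ⁻¹' S, f q.1 ∂(π.map Prod.swap) := by
    rw [show π.map Prod.swap = π.map MeasurableEquiv.prodComm from rfl,
      MeasurableEquiv.prodComm.measurableEmbedding.setIntegral_map]
    rfl
  rw [hswap, hswap, ← Measure.fst_map_swap]
  exact setIntegral_comp_fst_condExp hmB hmA hπ (by rwa [Measure.fst_map_swap])
    (@measurable_swap β α mB mA _ hS)

theorem Martingale.prodMk_of_bicausal {ι F : Type*} [Preorder ι] [NormedAddCommGroup F]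
    [NormedSpace ℝ F] [CompleteSpace F] [StandardBorelSpace α] [Nonempty α]
    [StandardBorelSpace β] [Nonempty β]
    {𝓕 : Filtration ι mα} {𝓖 : Filtration ι mβ} {π : Measure (α × β)} [IsFiniteMeasure π]
    {X : ι → α → E} {Y : ι → β → F} (hX : Martingale X 𝓕 π.fst) (hY : Martingale Y 𝓖 π.snd)
    (hπ : ∀ i, IsCausal (𝓕 i) (𝓖 i) π) (hπ' : ∀ i, IsCausal (𝓖 i) (𝓕 i) (π.map Prod.swap)) :
    Martingale (fun i p => (X i p.1, Y i p.2)) (𝓕.prod 𝓖) π := by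
  have hXπ (i : ι) : Integrable (fun p => X i p.1) π :=
    (hX.integrable i).comp_measurable measurable_fst
  have hYπ (i : ι) : Integrable (fun p => Y i p.2) π :=
    (hY.integrable i).comp_measurable measurable_snd
  have hadapted : StronglyAdapted (𝓕.prod 𝓖) fun i (p : α × β) => (X i p.1, Y i p.2) :=
    fun i => ((hX.stronglyAdapted i).comp_measurable measurable_fst).prodMk
      ((hY.stronglyAdapted i).comp_measurable measurable_snd)
  refine ⟨hadapted, fun i j hij => (ae_eq_condExp_of_forall_setIntegral_eq ((𝓕.prod 𝓖).le i)
    ((hXπ j).prodMk (hYπ j)) (fun S _ _ => ((hXπ i).prodMk (hYπ i)).integrableOn)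
    (fun S hS _ => ?_) (hadapted i).aestronglyMeasurable).symm⟩
  have hS' : MeasurableSet S := (𝓕.prod 𝓖).le i S hS
  rw [integral_pair (hXπ i).integrableOn (hYπ i).integrableOn,
    integral_pair (hXπ j).integrableOn (hYπ j).integrableOn]
  congr 1
  · rw [← setIntegral_comp_fst_condExp (𝓕.le i) (𝓖.le i) (hπ i) (hX.integrable j) hS]
    exact setIntegral_congr_ae hS' ((ae_eq_comp measurable_fst.aemeasurable
      (hX.condExp_ae_eq hij)).mono fun p hp _ => hp.symm)
  · rw [← setIntegral_comp_snd_condExp (𝓕.le i) (𝓖.le i) (hπ' i) (hY.integrable j) hS]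
    exact setIntegral_congr_ae hS' ((ae_eq_comp measurable_snd.aemeasurable
      (hY.condExp_ae_eq hij)).mono fun p hp _ => hp.symm)

theorem stmt19_general (d : ℕ) [StandardBorelSpace (PathSp d)] [Nonempty (PathSp d)]
    (P Q : Measure (PathSp d))
    (hP : Martingale (fun (t : I) (ω : PathSp d) => ω t) (canonF d) P)
    (hQ : Martingale (fun (t : I) (ω : PathSp d) => ω t) (canonF d) Q)
    (π : Measure (PathSp d × PathSp d)) [IsProbabilityMeasure π]
    (hπ1 : π.map Prod.fst = P) (hπ2 : π.map Prod.snd = Q)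
    (hc : Causal d P π)
    (hc' : Causal d Q (π.map Prod.swap)) :
    Martingale (fun (t : I) (p : PathSp d × PathSp d) => (p.1 t, p.2 t)) (prodF d) π := by
  subst hπ1 hπ2
  refine Martingale.prodMk_of_bicausal hP hQ hc fun t => ?_
  rw [IsCausal, Measure.fst_map_swap]
  exact hc' t

/-- Bicausal couplings of martingale laws are martingales: if the canonical process is a
martingale under both `P` and `Q` and `π` is a bicausal coupling of `P` and `Q`, then the
`ℝ^{2d}`-valued canonical process on `Ω × Ω` is a `π`-martingale in the product canonical
filtration. -/
theorem stmt19 (d : ℕ) [StandardBorelSpace (PathSp d)] [Nonempty (PathSp d)]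
    (P Q : Measure (PathSp d)) [IsProbabilityMeasure P] [IsProbabilityMeasure Q]
    (hP : Martingale (fun (t : I) (ω : PathSp d) => ω t) (canonF d) P)
    (hQ : Martingale (fun (t : I) (ω : PathSp d) => ω t) (canonF d) Q)
    (π : Measure (PathSp d × PathSp d)) [IsProbabilityMeasure π]
    (hπ1 : π.map Prod.fst = P) (hπ2 : π.map Prod.snd = Q)
    (hc : Causal d P π)
    (hc' : Causal d Q (π.map Prod.swap)) :
    Martingale (fun (t : I) (p : PathSp d × PathSp d) => (p.1 t, p.2 t)) (prodF d) π :=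
  stmt19_general d P Q hP hQ π hπ1 hπ2 hc hc'

end
end
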